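/- Let 1 → N → G →^ψ G̃ → 1 be a central extension of groups (so N = ker ψ is contained in the center of G). Let n ≥ 3 and let ρ, ρ' : B_n → G be two homomorphisms from the braid group with ψ∘ρ = ψ∘ρ'. Then there exists a central element τ ∈ N such that ρ'(σ_i) = τ·ρ(σ_i) for all 1 ≤ i ≤ n−1. -/

import Mathlib

/-- The braid relations on `m` generators. -/
def braidRels (m : ℕ) : Set (FreeGroup (Fin m)) :=
  {r | ∃ i j : Fin m, (i : ℕ) + 2 ≤ (j : ℕ) ∧
      r = FreeGroup.of i * FreeGroup.of j * (FreeGroup.of i)⁻¹ * (FreeGroup.of j)⁻¹} ∪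
  {r | ∃ i j : Fin m, (i : ℕ) + 1 = (j : ℕ) ∧
      r = FreeGroup.of i * FreeGroup.of j * FreeGroup.of i *
        (FreeGroup.of j * FreeGroup.of i * FreeGroup.of j)⁻¹}

/-- The braid group on `n` strands, with `n - 1` standard generators. -/
abbrev BraidGroup (n : ℕ) := PresentedGroup (braidRels (n - 1))

/-- The standard generator `σ_{i+1}` of the braid group (0-indexed: `braidGen i = σ_{i+1}`). -/
def braidGen {n : ℕ} (i : Fin (n - 1)) : BraidGroup n := PresentedGroup.of i

/-!
Since `ψ ∘ ρ = ψ ∘ ρ'` and `ker ψ` is central, `g ↦ ρ' g * (ρ g)⁻¹` is a homomorphism from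
`B_n` to the abelian group `Z(G)`. Applying it to a braid relation `σᵢ σⱼ σᵢ = σⱼ σᵢ σⱼ` and
cancelling in the abelian target shows that adjacent generators, hence (the Dynkin diagram being
connected) all generators, have the same image `τ`.
-/

lemma braidGen_mul_braidGen_mul_braidGen {n : ℕ} {i j : Fin (n - 1)} (hij : (i : ℕ) + 1 = j) :
    braidGen (n := n) i * braidGen j * braidGen i = braidGen j * braidGen i * braidGen j :=
  PresentedGroup.mk_eq_mk_of_mul_inv_mem (Or.inr ⟨i, j, hij, rfl⟩)

lemma eq_of_mul_mul_eq_mul_mul {M : Type*} [Group M] [IsMulCommutative M] {x y : M}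
    (h : x * y * x = y * x * y) : x = y := by
  rw [mul_comm' x y] at h
  exact mul_left_cancel h

lemma map_braidGen_eq_map_braidGen {n : ℕ} {M : Type*} [Group M] [IsMulCommutative M]
    (f : BraidGroup n →* M) (i j : Fin (n - 1)) : f (braidGen i) = f (braidGen j) := by
  have h0 : 0 < n - 1 := Nat.zero_lt_of_lt i.isLt
  suffices key : ∀ i : Fin (n - 1), f (braidGen i) = f (braidGen ⟨0, h0⟩) from
    (key i).trans (key j).symm
  rintro ⟨k, hk⟩
  induction k with
  | zero => rfl
  | succ k ih =>
    have hadj := congrArg f (braidGen_mul_braidGen_mul_braidGen (i := ⟨k, by omega⟩)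
      (j := ⟨k + 1, hk⟩) rfl)
    simp only [map_mul] at hadj
    exact (eq_of_mul_mul_eq_mul_mul hadj).symm.trans (ih (by omega))

section CentralDefect

variable {H G G' : Type*} [Group H] [Group G] [Group G'] {ψ : G →* G'} {ρ ρ' : H →* G}

lemma mul_inv_mem_ker_of_comp_eq (h : ψ.comp ρ = ψ.comp ρ') (g : H) :
    ρ' g * (ρ g)⁻¹ ∈ ψ.ker := by
  rw [MonoidHom.mem_ker, map_mul, map_inv, ← ψ.comp_apply, ← h, ψ.comp_apply, mul_inv_cancel]

def centralDefect (hcentral : ψ.ker ≤ Subgroup.center G) (h : ψ.comp ρ = ψ.comp ρ') :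
    H →* Subgroup.center G where
  toFun g := ⟨ρ' g * (ρ g)⁻¹, hcentral (mul_inv_mem_ker_of_comp_eq h g)⟩
  map_one' := by ext; simp
  map_mul' a b := by
    ext
    have hb := Subgroup.mem_center_iff.mp (hcentral (mul_inv_mem_ker_of_comp_eq h b))
    calc ρ' (a * b) * (ρ (a * b))⁻¹ = ρ' a * (ρ' b * (ρ b)⁻¹) * (ρ a)⁻¹ := by
          simp only [map_mul, mul_inv_rev, mul_assoc]
      _ = ρ' a * (ρ a)⁻¹ * (ρ' b * (ρ b)⁻¹) := by rw [hb (ρ' a), hb, mul_assoc]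

lemma coe_centralDefect (hcentral : ψ.ker ≤ Subgroup.center G) (h : ψ.comp ρ = ψ.comp ρ')
    (g : H) : (centralDefect hcentral h g : G) = ρ' g * (ρ g)⁻¹ :=
  rfl

end CentralDefect

theorem stmt_5_general (n : ℕ) (hn : 3 ≤ n) {G G' : Type*} [Group G] [Group G']
    (ψ : G →* G') (hcentral : ψ.ker ≤ Subgroup.center G)
    (ρ ρ' : BraidGroup n →* G) (h : ψ.comp ρ = ψ.comp ρ') :
    ∃ τ ∈ ψ.ker, ∀ i : Fin (n - 1), ρ' (braidGen i) = τ * ρ (braidGen i) := by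
  let σ₁ : Fin (n - 1) := ⟨0, by omega⟩
  refine ⟨ρ' (braidGen σ₁) * (ρ (braidGen σ₁))⁻¹, mul_inv_mem_ker_of_comp_eq h _, fun i => ?_⟩
  have hi := congrArg Subtype.val (map_braidGen_eq_map_braidGen (centralDefect hcentral h) i σ₁)
  rw [coe_centralDefect, coe_centralDefect] at hi
  rw [← hi, inv_mul_cancel_right]

theorem stmt_5 (n : ℕ) (hn : 3 ≤ n) {G G' : Type*} [Group G] [Group G']
    (ψ : G →* G') (hsurj : Function.Surjective ψ) (hcentral : ψ.ker ≤ Subgroup.center G)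
    (ρ ρ' : BraidGroup n →* G) (h : ψ.comp ρ = ψ.comp ρ') :
    ∃ τ ∈ ψ.ker, ∀ i : Fin (n - 1), ρ' (braidGen i) = τ * ρ (braidGen i) :=
  stmt_5_general n hn ψ hcentral ρ ρ' h
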